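/- A reduced positive definite real binary quadratic form F = [A,B,C] (with C ≥ A ≥ |B|, A > 0) attains its minimum on the coset {(x,y) ∈ ℤ² : x odd, y odd} more than twice (counting ±(x,y) as one) if and only if B = 0; in that case the minimum on this coset is A + C, attained exactly at (±1, ±1), and equals the sum of the minima A and C on the other two nontrivial cosets of 2ℤ² in ℤ². -/

import Mathlib

/-!
For odd `x, y` put `u = |x|, v = |y| ≥ 1` and `b = |B|`. Then `F(x, y) ≥ A u² - b u v + C v²`, and
`A u² - b u v + C v² - (A - b + C) = A (u - v)² + (2A - b)(u v - 1) + (C - A)(v² - 1)`,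
where every term is nonnegative for a reduced form and `2A - b ≥ A > 0`. So the minimum on the
(odd, odd) coset is `A - |B| + C`, attained only when `|x| = |y| = 1` and `B x y = -|B|`. If
`B ≠ 0` the last condition fixes the sign of `x y`, leaving only `±(x, y)`; if `B = 0` all four
points `(±1, ±1)` attain it.
-/

/-- The real binary quadratic form `A x² + B x y + C y²` evaluated at integers. -/
def binQF (A B C : ℝ) (x y : ℤ) : ℝ :=
  A * (x : ℝ) ^ 2 + B * (x : ℝ) * (y : ℝ) + C * (y : ℝ) ^ 2

lemma one_le_abs_intCast_of_odd {x : ℤ} (hx : Odd x) : (1 : ℝ) ≤ |(x : ℝ)| := by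
  rw [← Int.cast_abs]
  exact_mod_cast Int.one_le_abs (by rintro rfl; simp at hx)

lemma sub_abs_mul_le_binQF (A B C : ℝ) (x y : ℤ) :
    A * |(x : ℝ)| ^ 2 - |B| * (|(x : ℝ)| * |(y : ℝ)|) + C * |(y : ℝ)| ^ 2 ≤ binQF A B C x y := by
  have h := neg_abs_le (B * x * y)
  rw [abs_mul, abs_mul] at h
  simp only [binQF, sq_abs]
  linarith

section Reduced

variable {A b C u v : ℝ}

lemma reduced_decomposition (A b C u v : ℝ) :
    A * u ^ 2 - b * (u * v) + C * v ^ 2 - (A - b + C) =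
      A * (u - v) ^ 2 + (2 * A - b) * (u * v - 1) + (C - A) * (v ^ 2 - 1) := by
  ring

lemma reduced_min_le (hb : 0 ≤ b) (hbA : b ≤ A) (hAC : A ≤ C) (hu : 1 ≤ u) (hv : 1 ≤ v) :
    A - b + C ≤ A * u ^ 2 - b * (u * v) + C * v ^ 2 := by
  have huv : 1 ≤ u * v := by nlinarith
  have hv2 : 1 ≤ v ^ 2 := by nlinarith
  nlinarith [reduced_decomposition A b C u v, mul_nonneg (hb.trans hbA) (sq_nonneg (u - v)),
    mul_nonneg (by linarith : 0 ≤ 2 * A - b) (sub_nonneg.2 huv),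
    mul_nonneg (sub_nonneg.2 hAC) (sub_nonneg.2 hv2)]

lemma eq_one_of_reduced_le_min (hA : 0 < A) (hbA : b ≤ A) (hAC : A ≤ C) (hu : 1 ≤ u)
    (hv : 1 ≤ v) (h : A * u ^ 2 - b * (u * v) + C * v ^ 2 ≤ A - b + C) : u = 1 ∧ v = 1 := by
  have hv2 : 1 ≤ v ^ 2 := by nlinarith
  have hcross : (2 * A - b) * (u * v - 1) ≤ 0 := by
    nlinarith [reduced_decomposition A b C u v, mul_nonneg hA.le (sq_nonneg (u - v)),
      mul_nonneg (sub_nonneg.2 hAC) (sub_nonneg.2 hv2)]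
  have huv : u * v ≤ 1 := by
    nlinarith [nonpos_of_mul_nonpos_right hcross (by linarith : 0 < 2 * A - b)]
  constructor <;> nlinarith

end Reduced

section OddCoset

variable {A B C : ℝ} {x y : ℤ}

lemma sub_abs_add_le_binQF_of_odd (hBA : |B| ≤ A) (hAC : A ≤ C) (hx : Odd x) (hy : Odd y) :
    A - |B| + C ≤ binQF A B C x y :=
  (reduced_min_le (abs_nonneg B) hBA hAC (one_le_abs_intCast_of_odd hx)
    (one_le_abs_intCast_of_odd hy)).trans (sub_abs_mul_le_binQF A B C x y)

lemma eq_of_binQF_eq_sub_abs_add (hA : 0 < A) (hBA : |B| ≤ A) (hAC : A ≤ C) (hx : Odd x)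
    (hy : Odd y) (h : binQF A B C x y = A - |B| + C) :
    (x = 1 ∨ x = -1) ∧ (y = 1 ∨ y = -1) ∧ B * x * y = -|B| := by
  obtain ⟨hu, hv⟩ := eq_one_of_reduced_le_min hA hBA hAC (one_le_abs_intCast_of_odd hx)
    (one_le_abs_intCast_of_odd hy) (h ▸ sub_abs_mul_le_binQF A B C x y)
  rw [← Int.cast_abs, Int.cast_eq_one, ← Int.isUnit_iff_abs_eq, Int.isUnit_iff] at hu hv
  refine ⟨hu, hv, ?_⟩
  rcases hu with rfl | rfl <;> rcases hv with rfl | rfl <;>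
    · simp only [binQF] at h
      push_cast at h ⊢
      linarith

lemma exists_odd_binQF_eq_sub_abs_add (A B C : ℝ) :
    ∃ x y : ℤ, Odd x ∧ Odd y ∧ binQF A B C x y = A - |B| + C := by
  rcases abs_cases B with ⟨hB, -⟩ | ⟨hB, -⟩
  · exact ⟨1, -1, odd_one, odd_neg_one, by simp [binQF, hB]; ring⟩
  · exact ⟨1, 1, odd_one, odd_one, by simp [binQF, hB]⟩

end OddCoset

lemma Int.eq_or_eq_neg_of_mul_eq_of_units {a b c d : ℤ} (ha : a = 1 ∨ a = -1)
    (hb : b = 1 ∨ b = -1) (hc : c = 1 ∨ c = -1) (hd : d = 1 ∨ d = -1) (h : a * b = c * d) :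
    (c, d) = (a, b) ∨ (c, d) = (-a, -b) := by
  rcases ha with rfl | rfl <;> rcases hb with rfl | rfl <;> rcases hc with rfl | rfl <;>
    rcases hd with rfl | rfl <;> simp_all

theorem stmt_5 (A B C : ℝ) (hA : 0 < A) (hBA : |B| ≤ A) (hAC : A ≤ C) :
    ((∃ p q : ℤ × ℤ, Odd p.1 ∧ Odd p.2 ∧ Odd q.1 ∧ Odd q.2 ∧
        (∀ x y : ℤ, Odd x → Odd y → binQF A B C p.1 p.2 ≤ binQF A B C x y) ∧
        binQF A B C q.1 q.2 = binQF A B C p.1 p.2 ∧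
        q ≠ p ∧ q ≠ (-p.1, -p.2)) ↔ B = 0) ∧
    (B = 0 →
      (∀ x y : ℤ, Odd x → Odd y → A + C ≤ binQF A B C x y) ∧
      (∀ x y : ℤ, Odd x → Odd y →
        (binQF A B C x y = A + C ↔ (x = 1 ∨ x = -1) ∧ (y = 1 ∨ y = -1)))) := by
  refine ⟨⟨?_, ?_⟩, ?_⟩
  · rintro ⟨⟨p₁, p₂⟩, ⟨q₁, q₂⟩, hp₁, hp₂, hq₁, hq₂, hmin, hqp, hne, hne_neg⟩
    by_contra hB
    obtain ⟨x, y, hx, hy, hxy⟩ := exists_odd_binQF_eq_sub_abs_add A B C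
    have hp := le_antisymm (hxy ▸ hmin x y hx hy) (sub_abs_add_le_binQF_of_odd hBA hAC hp₁ hp₂)
    obtain ⟨hp₁', hp₂', hpB⟩ := eq_of_binQF_eq_sub_abs_add hA hBA hAC hp₁ hp₂ hp
    obtain ⟨hq₁', hq₂', hqB⟩ := eq_of_binQF_eq_sub_abs_add hA hBA hAC hq₁ hq₂ (hqp.trans hp)
    have hprod : p₁ * p₂ = q₁ * q₂ := by
      exact_mod_cast mul_left_cancel₀ hB (by linear_combination hpB - hqB :
        B * ((p₁ : ℝ) * p₂) = B * (q₁ * q₂))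
    rcases Int.eq_or_eq_neg_of_mul_eq_of_units hp₁' hp₂' hq₁' hq₂' hprod with h | h
    exacts [hne h, hne_neg h]
  · rintro rfl
    refine ⟨(1, 1), (1, -1), odd_one, odd_one, odd_one, odd_neg_one, fun x y hx hy => ?_,
      by simp [binQF], by simp, by simp⟩
    simpa [binQF] using sub_abs_add_le_binQF_of_odd (B := 0) hBA hAC hx hy
  · rintro rfl
    refine ⟨fun x y hx hy => by simpa using sub_abs_add_le_binQF_of_odd hBA hAC hx hy,
      fun x y hx hy => ⟨fun h => ?_, ?_⟩⟩
    · obtain ⟨hx', hy', -⟩ := eq_of_binQF_eq_sub_abs_add hA hBA hAC hx hy (by simpa using h)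
      exact ⟨hx', hy'⟩
    · rintro ⟨rfl | rfl, rfl | rfl⟩ <;> simp [binQF]
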